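/- arXiv:1705.10149 — 2 statements merged into one kernel-verified Lean document; each statement's English description precedes it below -/
import Mathlib

section
/- Let u : ℝ → 𝔤, ν : ℝ → V, and m : ℝ → V* be continuous curves, and let μ : ℝ → 𝔤*, σ : ℝ → V*, n : ℝ → V be differentiable curves satisfying, for every t, the metamorphosis Euler–Poincaré system: μ'(t) + ad*_{u(t)} μ(t) + m(t) ⋄ n(t) + σ(t) ⋄ ν(t) = 0, σ'(t) + u(t) ⋆ σ(t) − m(t) = 0, and n'(t) = ν(t) + u(t)·n(t). Then the curve t ↦ μ(t) + σ(t) ⋄ n(t) is differentiable and satisfies the coadjoint motion equation d/dt (μ(t) + σ(t) ⋄ n(t)) + ad*_{u(t)} (μ(t) + σ(t) ⋄ n(t)) = 0 for every t. -/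
open Module

variable {G V : Type*}
  [NormedAddCommGroup G] [NormedSpace ℝ G] [FiniteDimensional ℝ G]
  [NormedAddCommGroup V] [NormedSpace ℝ V] [FiniteDimensional ℝ V]

/-- The diamond operator `⋄ : V* × V → 𝔤*`, `⟨σ ⋄ v, u⟩ = -⟨σ, u·v⟩`, where the
`𝔤`-action on `V` is given by the bilinear map `ρ`. -/
noncomputable def dia (ρ : G →ₗ[ℝ] V →ₗ[ℝ] V) (σ : V →L[ℝ] ℝ) (v : V) : G →L[ℝ] ℝ :=
  LinearMap.toContinuousLinearMap (-((σ : V →ₗ[ℝ] ℝ) ∘ₗ (ρ.flip v)))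

/-- The star operator `⋆ : 𝔤 × V* → V*`, `⟨u ⋆ σ, v⟩ = ⟨σ, u·v⟩`. -/
noncomputable def starOp (ρ : G →ₗ[ℝ] V →ₗ[ℝ] V) (u : G) (σ : V →L[ℝ] ℝ) : V →L[ℝ] ℝ :=
  LinearMap.toContinuousLinearMap ((σ : V →ₗ[ℝ] ℝ) ∘ₗ (ρ u))

/-- The coadjoint operator `ad*_u : 𝔤* → 𝔤*`, `⟨ad*_u μ, ξ⟩ = ⟨μ, [u, ξ]⟩`, where the
Lie bracket on `𝔤` is given by the bilinear map `bra`. -/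
noncomputable def coad (bra : G →ₗ[ℝ] G →ₗ[ℝ] G) (u : G) (μ : G →L[ℝ] ℝ) : G →L[ℝ] ℝ :=
  LinearMap.toContinuousLinearMap ((μ : G →ₗ[ℝ] ℝ) ∘ₗ (bra u))

noncomputable def diaCLM (ρ : G →ₗ[ℝ] V →ₗ[ℝ] V) :
    (V →L[ℝ] ℝ) →L[ℝ] V →L[ℝ] (G →L[ℝ] ℝ) :=
  LinearMap.toContinuousLinearMap
  { toFun := fun σ => LinearMap.toContinuousLinearMap
      { toFun := fun v => dia ρ σ v
        map_add' := fun v w => by ext ξ; simp [dia]; ring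
        map_smul' := fun c v => by ext ξ; simp [dia] }
    map_add' := fun σ τ => by ext v ξ; simp [dia]; ring
    map_smul' := fun c σ => by ext v ξ; simp [dia] }

lemma diaCLM_apply (ρ : G →ₗ[ℝ] V →ₗ[ℝ] V) (σ : V →L[ℝ] ℝ) (v : V) :
    diaCLM ρ σ v = dia ρ σ v := rfl

/-- Solutions of the metamorphosis Euler–Poincaré system satisfy the coadjoint
motion equation `d/dt (μ + σ ⋄ n) + ad*_{u} (μ + σ ⋄ n) = 0`. -/
theorem coadjoint_motion_of_EP
    (bra : G →ₗ[ℝ] G →ₗ[ℝ] G)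
    (hskew : ∀ x : G, bra x x = 0)
    (hjac : ∀ x y z : G, bra x (bra y z) + bra y (bra z x) + bra z (bra x y) = 0)
    (ρ : G →ₗ[ℝ] V →ₗ[ℝ] V)
    (hrep : ∀ (x y : G) (v : V), ρ (bra x y) v = ρ x (ρ y v) - ρ y (ρ x v))
    (u : ℝ → G) (ν : ℝ → V) (m : ℝ → V →L[ℝ] ℝ)
    (hu : Continuous u) (hν : Continuous ν) (hm : Continuous m)
    (μ : ℝ → G →L[ℝ] ℝ) (σ : ℝ → V →L[ℝ] ℝ) (n : ℝ → V)
    (hμ : Differentiable ℝ μ) (hσ : Differentiable ℝ σ) (hn : Differentiable ℝ n)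
    (heq1 : ∀ t, deriv μ t + coad bra (u t) (μ t)
        + dia ρ (m t) (n t) + dia ρ (σ t) (ν t) = 0)
    (heq2 : ∀ t, deriv σ t + starOp ρ (u t) (σ t) - m t = 0)
    (heq3 : ∀ t, deriv n t = ν t + ρ (u t) (n t)) :
    Differentiable ℝ (fun t => μ t + dia ρ (σ t) (n t))
    ∧ ∀ t, deriv (fun t => μ t + dia ρ (σ t) (n t)) t
        + coad bra (u t) (μ t + dia ρ (σ t) (n t)) = 0 := by
  have key : ∀ t, HasDerivAt (fun t => μ t + dia ρ (σ t) (n t))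
      (deriv μ t + (diaCLM ρ (deriv σ t) (n t) + diaCLM ρ (σ t) (deriv n t))) t := by
    intro t
    have hF : HasFDerivAt (diaCLM ρ) (diaCLM ρ) (σ t) :=
      ContinuousLinearMap.hasFDerivAt (𝕜 := ℝ) (E := V →L[ℝ] ℝ)
        (F := V →L[ℝ] (G →L[ℝ] ℝ)) (diaCLM ρ)
    have hc := HasFDerivAt.comp_hasDerivAt (l := diaCLM ρ) (l' := diaCLM ρ) (f := σ) t hF (hσ t).hasDerivAt
    have h2 : HasDerivAt (fun s => diaCLM ρ (σ s) (n s))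
        (diaCLM ρ (deriv σ t) (n t) + diaCLM ρ (σ t) (deriv n t)) t :=
      hc.clm_apply (hn t).hasDerivAt
    exact ((hμ t).hasDerivAt).add h2
  refine ⟨fun t => (key t).differentiableAt, fun t => ?_⟩
  rw [(key t).deriv]
  ext ξ
  have h1 := congrArg (fun f => f ξ) (heq1 t)
  have h2 := congrArg (fun f => f ((ρ ξ) (n t))) (heq2 t)
  have hr := congrArg (σ t) (hrep (u t) ξ (n t))
  have h3 := heq3 t
  simp only [diaCLM_apply, dia, coad, starOp, h3, ContinuousLinearMap.add_apply,
    ContinuousLinearMap.sub_apply, ContinuousLinearMap.zero_apply,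
    LinearMap.coe_toContinuousLinearMap', ContinuousLinearMap.coe_coe,
    LinearMap.neg_apply, LinearMap.comp_apply, LinearMap.flip_apply, map_add, map_sub,
    ContinuousLinearMap.map_add, ContinuousLinearMap.coe_add, Pi.add_apply, LinearMap.add_apply, LinearMap.coe_toContinuousLinearMap] at h1 h2 hr ⊢
  linarith
end

section
/- Let u : ℝ → 𝔤, ν : ℝ → V, m : ℝ → V* be continuous curves and let σ : ℝ → V*, n : ℝ → V be differentiable curves satisfying σ'(t) + u(t) ⋆ σ(t) − m(t) = 0 and n'(t) = ν(t) + u(t)·n(t) for all t. Define μ(t) := −σ(t) ⋄ n(t), so that μ + σ ⋄ n ≡ 0. Then μ is differentiable and satisfies the metamorphosis Euler–Poincaré equation μ'(t) + ad*_{u(t)} μ(t) + m(t) ⋄ n(t) + σ(t) ⋄ ν(t) = 0 for all t. (Hence the system with vanishing momentum map is equivalent to the Euler–Poincaré system with vanishing endpoint momentum.) -/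
open Module

variable {G V : Type*}
  [NormedAddCommGroup G] [NormedSpace ℝ G] [FiniteDimensional ℝ G]
  [NormedAddCommGroup V] [NormedSpace ℝ V] [FiniteDimensional ℝ V]

lemma dia_apply (ρ : G →ₗ[ℝ] V →ₗ[ℝ] V) (σ : V →L[ℝ] ℝ) (v : V) (ξ : G) :
    dia ρ σ v ξ = -σ (ρ ξ v) := by
  simp [dia]

lemma starOp_apply (ρ : G →ₗ[ℝ] V →ₗ[ℝ] V) (u : G) (σ : V →L[ℝ] ℝ) (v : V) :
    starOp ρ u σ v = σ (ρ u v) := by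
  simp [starOp]

lemma coad_apply (bra : G →ₗ[ℝ] G →ₗ[ℝ] G) (u : G) (μ : G →L[ℝ] ℝ) (ξ : G) :
    coad bra u μ ξ = μ (bra u ξ) := by
  simp [coad]

/-- The diamond operator bundled as a continuous bilinear map. -/
noncomputable def diaL (ρ : G →ₗ[ℝ] V →ₗ[ℝ] V) :
    (V →L[ℝ] ℝ) →L[ℝ] V →L[ℝ] (G →L[ℝ] ℝ) :=
  LinearMap.toContinuousLinearMap
  { toFun := fun σ => LinearMap.toContinuousLinearMap
      { toFun := fun v => dia ρ σ v
        map_add' := by intro v w; ext ξ; simp [dia_apply]; ring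
        map_smul' := by intro c v; ext ξ; simp [dia_apply, mul_comm] }
    map_add' := by intro σ τ; ext v ξ; simp [dia_apply]; ring
    map_smul' := by intro c σ; ext v ξ; simp [dia_apply] }

lemma diaL_apply (ρ : G →ₗ[ℝ] V →ₗ[ℝ] V) (σ : V →L[ℝ] ℝ) (v : V) :
    diaL ρ σ v = dia ρ σ v := rfl

/-- If `σ` and `n` solve `σ' + u ⋆ σ − m = 0` and `n' = ν + u·n`, then
`μ := −σ ⋄ n` (so that `μ + σ ⋄ n ≡ 0`) is differentiable and satisfies the
metamorphosis Euler–Poincaré equation `μ' + ad*_u μ + m ⋄ n + σ ⋄ ν = 0`. -/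
theorem EP_from_vanishing_momentum
    (bra : G →ₗ[ℝ] G →ₗ[ℝ] G)
    (hskew : ∀ x : G, bra x x = 0)
    (hjac : ∀ x y z : G, bra x (bra y z) + bra y (bra z x) + bra z (bra x y) = 0)
    (ρ : G →ₗ[ℝ] V →ₗ[ℝ] V)
    (hrep : ∀ (x y : G) (v : V), ρ (bra x y) v = ρ x (ρ y v) - ρ y (ρ x v))
    (u : ℝ → G) (ν : ℝ → V) (m : ℝ → V →L[ℝ] ℝ)
    (hu : Continuous u) (hν : Continuous ν) (hm : Continuous m)
    (σ : ℝ → V →L[ℝ] ℝ) (n : ℝ → V)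
    (hσ : Differentiable ℝ σ) (hn : Differentiable ℝ n)
    (heq2 : ∀ t, deriv σ t + starOp ρ (u t) (σ t) - m t = 0)
    (heq3 : ∀ t, deriv n t = ν t + ρ (u t) (n t)) :
    Differentiable ℝ (fun t => - dia ρ (σ t) (n t))
    ∧ ∀ t, deriv (fun t => - dia ρ (σ t) (n t)) t
        + coad bra (u t) (- dia ρ (σ t) (n t))
        + dia ρ (m t) (n t) + dia ρ (σ t) (ν t) = 0 := by
  have key : ∀ t, HasDerivAt (fun t => - dia ρ (σ t) (n t))
      (-(dia ρ (deriv σ t) (n t) + dia ρ (σ t) (deriv n t))) t := by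
    intro t
    have h1 : HasDerivAt (fun t => diaL ρ (σ t)) (diaL ρ (deriv σ t)) t := by
      have hf : HasFDerivAt (diaL ρ) (diaL ρ) (σ t) := by
        fun_prop
      exact HasFDerivAt.comp_hasDerivAt (𝕜 := ℝ) (F := V →L[ℝ] ℝ)
        (E := V →L[ℝ] G →L[ℝ] ℝ) t hf (hσ t).hasDerivAt
    have h2 := (h1.clm_apply (hn t).hasDerivAt).neg
    simp [diaL_apply] at h2 ⊢
    exact h2
  refine ⟨fun t => (key t).differentiableAt, fun t => ?_⟩
  rw [(key t).deriv]
  have hσ' : deriv σ t = m t - starOp ρ (u t) (σ t) :=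
    eq_sub_of_add_eq (sub_eq_zero.mp (heq2 t))
  ext ξ
  simp only [ContinuousLinearMap.add_apply, ContinuousLinearMap.neg_apply,
    ContinuousLinearMap.zero_apply, ContinuousLinearMap.sub_apply,
    dia_apply, coad_apply, starOp_apply, hσ', heq3 t, hrep, map_add, map_sub]
  ring
end
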